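/- For every integer k ≥ 1, the function y(x) = x^k · √(1−x) · H_k(x) is twice differentiable on (0,1) and satisfies y''(x) = (u²·f(x) + g(x))·y(x) for all x ∈ (0,1), where u = k − 1/2, f(x) = 1/(x²(1−x)), and g(x) = −1/(4x²(1−x)²) + 1/(4x(1−x)). -/

import Mathlib

noncomputable section

/-- The Gauss hypergeometric function `₂F₁(k, k, 2k; x)`, written as
`H_k(x) = Σ_{n=0}^{∞} (Γ(k+n)² Γ(2k) / (Γ(k)² Γ(2k+n) n!)) x^n` for `|x| < 1`. -/
def H (k : ℕ) (x : ℝ) : ℝ :=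
  ∑' n : ℕ, (Real.Gamma ((k : ℝ) + n)) ^ 2 * Real.Gamma (2 * (k : ℝ)) /
      ((Real.Gamma (k : ℝ)) ^ 2 * Real.Gamma (2 * (k : ℝ) + n) * (Nat.factorial n : ℝ)) * x ^ n

/-- `Φ_k(x) = 2(Γ(k)²/Γ(2k)) x^k ₂F₁(k,k,2k;x)`. -/
def PhiK (k : ℕ) (x : ℝ) : ℝ :=
  2 * (Real.Gamma (k : ℝ)) ^ 2 / Real.Gamma (2 * (k : ℝ)) * x ^ k * H k x

/-- `ψ_k(x) = 2(Γ(k)²/Γ(2k)) x^k ₂F₁(k,k,2k;−x)`. -/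
def psiK (k : ℕ) (x : ℝ) : ℝ :=
  2 * (Real.Gamma (k : ℝ)) ^ 2 / Real.Gamma (2 * (k : ℝ)) * x ^ k * H k (-x)

namespace HAux

/-- coefficient of the hypergeometric series -/
def a (k n : ℕ) : ℝ :=
  (Real.Gamma ((k : ℝ) + n)) ^ 2 * Real.Gamma (2 * (k : ℝ)) /
      ((Real.Gamma (k : ℝ)) ^ 2 * Real.Gamma (2 * (k : ℝ) + n) * (Nat.factorial n : ℝ))

lemma a_pos {k : ℕ} (hk : 1 ≤ k) (n : ℕ) : 0 < a k n := by
  have hk' : (1:ℝ) ≤ k := by exact_mod_cast hk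
  have hn : (0:ℝ) ≤ n := Nat.cast_nonneg n
  have h1 : (0:ℝ) < (k:ℝ) + n := by linarith
  have h2 : (0:ℝ) < 2 * (k:ℝ) := by linarith
  have h3 : (0:ℝ) < (k:ℝ) := by linarith
  have h4 : (0:ℝ) < 2 * (k:ℝ) + n := by linarith
  have hf : (0:ℝ) < (Nat.factorial n : ℝ) := by exact_mod_cast Nat.factorial_pos n
  unfold a
  positivity

lemma a_rec {k : ℕ} (hk : 1 ≤ k) (n : ℕ) :
    ((n:ℝ) + 1) * (2*(k:ℝ) + n) * a k (n+1) = ((k:ℝ) + n)^2 * a k n := by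
  have hk' : (1:ℝ) ≤ k := by exact_mod_cast hk
  have hn : (0:ℝ) ≤ n := Nat.cast_nonneg n
  have h1 : ((k:ℝ) + n) ≠ 0 := by linarith
  have h4 : (2 * (k:ℝ) + n) ≠ 0 := by linarith
  have hG1 : Real.Gamma ((k:ℝ) + ((n:ℝ)+1)) = ((k:ℝ) + n) * Real.Gamma ((k:ℝ) + n) := by
    rw [show (k:ℝ) + ((n:ℝ)+1) = ((k:ℝ) + n) + 1 by ring]
    exact Real.Gamma_add_one h1
  have hG2 : Real.Gamma (2*(k:ℝ) + ((n:ℝ)+1)) = (2*(k:ℝ) + n) * Real.Gamma (2*(k:ℝ) + n) := by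
    rw [show 2*(k:ℝ) + ((n:ℝ)+1) = (2*(k:ℝ) + n) + 1 by ring]
    exact Real.Gamma_add_one h4
  have hGk : Real.Gamma (k:ℝ) ≠ 0 := (Real.Gamma_pos_of_pos (by linarith)).ne'
  have hGkn : Real.Gamma (2*(k:ℝ) + n) ≠ 0 := (Real.Gamma_pos_of_pos (by
    have : (0:ℝ) < 2*(k:ℝ) + n := by linarith
    exact this)).ne'
  have hfn : ((Nat.factorial n : ℕ):ℝ) ≠ 0 := by exact_mod_cast (Nat.factorial_pos n).ne'
  unfold a
  rw [Nat.factorial_succ]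
  push_cast
  rw [hG1, hG2]
  field_simp

lemma a_antitone {k : ℕ} (hk : 1 ≤ k) {n : ℕ} (hn : k^2 ≤ n) : a k (n+1) ≤ a k n := by
  have hrec := a_rec hk n
  have hk' : (1:ℝ) ≤ k := by exact_mod_cast hk
  have hn' : ((k:ℝ))^2 ≤ n := by exact_mod_cast hn
  have hpos : (0:ℝ) < ((n:ℝ) + 1) * (2*(k:ℝ) + n) := by nlinarith
  have hcmp : ((k:ℝ) + n)^2 ≤ ((n:ℝ) + 1) * (2*(k:ℝ) + n) := by nlinarith
  have h1 := a_pos hk n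
  have h2 := a_pos hk (n+1)
  nlinarith [hrec]

lemma a_bounded {k : ℕ} (hk : 1 ≤ k) (n : ℕ) :
    a k n ≤ ∑ i ∈ Finset.range (k^2+1), a k i := by
  rcases le_or_gt n (k^2) with h | h
  · exact Finset.single_le_sum (f := fun i => a k i) (fun i _ => (a_pos hk i).le)
      (Finset.mem_range.2 (by omega))
  · have key : ∀ m, a k (k^2 + m) ≤ a k (k^2) := by
      intro m
      induction m with
      | zero => simp
      | succ p ih => exact le_trans (a_antitone hk (Nat.le_add_right _ _)) ih
    have := key (n - k^2)
    rw [Nat.add_sub_cancel' h.le] at this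
    exact this.trans (Finset.single_le_sum (f := fun i => a k i)
      (fun i _ => (a_pos hk i).le) (Finset.mem_range.2 (by omega)))

/-- master summability -/
lemma summable_aux {k : ℕ} (hk : 1 ≤ k) (j : ℕ) {r : ℝ} (hr0 : 0 ≤ r) (hr : r < 1) :
    Summable (fun n => a k n * (n:ℝ)^j * r^n) := by
  set C := ∑ i ∈ Finset.range (k^2+1), a k i with hC
  have hC0 : 0 ≤ C := Finset.sum_nonneg fun i _ => (a_pos hk i).le
  have hsum : Summable (fun n : ℕ => C * ((n:ℝ)^j * r^n)) := by
    apply Summable.mul_left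
    exact summable_pow_mul_geometric_of_norm_lt_one j (by rwa [Real.norm_eq_abs, abs_of_nonneg hr0])
  apply Summable.of_nonneg_of_le (fun n => mul_nonneg (mul_nonneg (a_pos hk n).le (by positivity)) (by positivity))
    (fun n => ?_) hsum
  have := a_bounded hk n
  have h2 : (0:ℝ) ≤ (n:ℝ)^j * r^n := by positivity
  calc a k n * (n:ℝ)^j * r^n = a k n * ((n:ℝ)^j * r^n) := by ring
    _ ≤ C * ((n:ℝ)^j * r^n) := mul_le_mul_of_nonneg_right this h2

def D1 (k : ℕ) (x : ℝ) : ℝ := ∑' n : ℕ, a k n * ((n:ℝ) * x^(n-1))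

def D2 (k : ℕ) (x : ℝ) : ℝ := ∑' n : ℕ, a k n * ((n:ℝ) * (((n-1 : ℕ):ℝ) * x^(n-2)))

lemma hasDerivAt_H {k : ℕ} (hk : 1 ≤ k) {x : ℝ} (hx : |x| < 1) :
    HasDerivAt (fun z : ℝ => ∑' n : ℕ, a k n * z^n) (D1 k x) x := by
  set r : ℝ := (|x| + 1)/2 with hr
  have hr0 : 0 < r := by positivity
  have hxr : |x| < r := by rw [hr]; linarith
  have hr1 : r < 1 := by rw [hr]; linarith [abs_nonneg x]
  have hball : x ∈ Metric.ball (0:ℝ) r := by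
    rw [mem_ball_zero_iff, Real.norm_eq_abs]; exact hxr
  have hu : Summable (fun n : ℕ => a k n * (n:ℝ)^1 * r^n / r) :=
    (summable_aux hk 1 hr0.le hr1).div_const r
  refine hasDerivAt_tsum_of_isPreconnected (u := fun n => a k n * (n:ℝ)^1 * r^n / r)
    (g := fun (n : ℕ) (z : ℝ) => a k n * z^n)
    (g' := fun (n : ℕ) (y : ℝ) => a k n * ((n:ℝ) * y^(n-1)))
    (t := Metric.ball (0:ℝ) r) (y₀ := 0)
    hu Metric.isOpen_ball (convex_ball _ _).isPreconnected ?_ ?_ (by simpa using hr0) ?_ hball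
  · intro n y _
    exact (hasDerivAt_pow n y).const_mul (a k n)
  · intro n y hy
    have hy' : |y| ≤ r := by
      have := mem_ball_zero_iff.1 hy
      rw [Real.norm_eq_abs] at this; exact this.le
    have hpos := (a_pos hk n).le
    rw [Real.norm_eq_abs, abs_mul, abs_mul, abs_of_nonneg hpos, Nat.abs_cast, abs_pow]
    rcases n with _ | m
    · simp [hr0.le]
    · have hle : |y|^(m+1-1) ≤ r^m := by
        simpa using pow_le_pow_left₀ (abs_nonneg y) hy' m
      have heq : a k (m+1) * ((m+1:ℕ):ℝ)^1 * r^(m+1) / r = a k (m+1) * ((m+1:ℕ):ℝ) * r^m := by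
        field_simp [pow_succ]; ring
      show a k (m+1) * (((m+1:ℕ):ℝ) * |y|^(m+1-1)) ≤ a k (m+1) * ((m+1:ℕ):ℝ)^1 * r^(m+1) / r
      rw [heq, ← mul_assoc]
      exact mul_le_mul_of_nonneg_left hle (mul_nonneg hpos (Nat.cast_nonneg _))
  · apply summable_of_ne_finset_zero (s := ({0} : Finset ℕ))
    intro n hn
    simp only [Finset.mem_singleton] at hn
    simp [zero_pow hn]

lemma hasDerivAt_D1 {k : ℕ} (hk : 1 ≤ k) {x : ℝ} (hx : |x| < 1) :
    HasDerivAt (D1 k) (D2 k x) x := by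
  set r : ℝ := (|x| + 1)/2 with hr
  have hr0 : 0 < r := by positivity
  have hxr : |x| < r := by rw [hr]; linarith
  have hr1 : r < 1 := by rw [hr]; linarith [abs_nonneg x]
  have hball : x ∈ Metric.ball (0:ℝ) r := by
    rw [mem_ball_zero_iff, Real.norm_eq_abs]; exact hxr
  have hu : Summable (fun n : ℕ => a k n * (n:ℝ)^2 * r^n / r^2) :=
    (summable_aux hk 2 hr0.le hr1).div_const (r^2)
  have main := hasDerivAt_tsum_of_isPreconnected (u := fun n => a k n * (n:ℝ)^2 * r^n / r^2)
    (g := fun (n : ℕ) (z : ℝ) => a k n * ((n:ℝ) * z^(n-1)))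
    (g' := fun (n : ℕ) (y : ℝ) => a k n * ((n:ℝ) * (((n-1 : ℕ):ℝ) * y^(n-2))))
    (t := Metric.ball (0:ℝ) r) (y₀ := 0)
    hu Metric.isOpen_ball (convex_ball _ _).isPreconnected ?_ ?_ (by simpa using hr0) ?_ hball
  · exact main
  · intro n y _
    have := ((hasDerivAt_pow (n-1) y).const_mul ((n:ℝ))).const_mul (a k n)
    simpa [Nat.sub_sub] using this
  · intro n y hy
    have hy' : |y| ≤ r := by
      have := mem_ball_zero_iff.1 hy
      rw [Real.norm_eq_abs] at this; exact this.le
    have hpos := (a_pos hk n).le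
    rw [Real.norm_eq_abs, abs_mul, abs_mul, abs_mul, abs_of_nonneg hpos, Nat.abs_cast,
      Nat.abs_cast, abs_pow]
    rcases n with _ | m
    · simp [hr0.le]
    rcases m with _ | p
    · simp [hr0.le]
      positivity
    · have hle : |y|^(p+1+1-2) ≤ r^p := by
        simpa using pow_le_pow_left₀ (abs_nonneg y) hy' p
      have heq : a k (p+1+1) * ((p+1+1:ℕ):ℝ)^2 * r^(p+1+1) / r^2
          = a k (p+1+1) * (((p+1+1:ℕ):ℝ)^2 * r^p) := by
        field_simp; ring
      show a k (p+1+1) * (((p+1+1:ℕ):ℝ) * (((p+1+1-1:ℕ):ℝ) * |y|^(p+1+1-2)))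
          ≤ a k (p+1+1) * ((p+1+1:ℕ):ℝ)^2 * r^(p+1+1) / r^2
      rw [heq]
      apply mul_le_mul_of_nonneg_left _ hpos
      have h2 : ((p+1+1-1:ℕ):ℝ) ≤ ((p+1+1:ℕ):ℝ) := Nat.cast_le.2 (by omega)
      calc ((p+1+1:ℕ):ℝ) * (((p+1+1-1:ℕ):ℝ) * |y|^(p+1+1-2))
          ≤ ((p+1+1:ℕ):ℝ) * (((p+1+1:ℕ):ℝ) * r^p) := by
            apply mul_le_mul_of_nonneg_left _ (Nat.cast_nonneg _)
            exact mul_le_mul h2 hle (by positivity) (Nat.cast_nonneg _)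
        _ = ((p+1+1:ℕ):ℝ)^2 * r^p := by ring
  · apply summable_of_ne_finset_zero (s := ({0, 1} : Finset ℕ))
    intro n hn
    simp only [Finset.mem_insert, Finset.mem_singleton] at hn
    push_neg at hn
    have h1 : n - 1 ≠ 0 := by omega
    simp [zero_pow h1]

def Aa (k : ℕ) (x : ℝ) (n : ℕ) : ℝ := (n:ℝ) * ((n:ℝ) + 2*(k:ℝ) - 1) * a k n * x^(n-1)
def Bb (k : ℕ) (x : ℝ) (n : ℕ) : ℝ := ((n:ℝ) + (k:ℝ))^2 * a k n * x^n

lemma summable_S0 {k : ℕ} (hk : 1 ≤ k) {x : ℝ} (hx0 : 0 < x) (hx1 : x < 1) :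
    Summable (fun n : ℕ => a k n * x^n) := by
  simpa using summable_aux hk 0 hx0.le hx1

lemma summable_S1 {k : ℕ} (hk : 1 ≤ k) {x : ℝ} (hx0 : 0 < x) (hx1 : x < 1) :
    Summable (fun n : ℕ => a k n * ((n:ℝ) * x^(n-1))) := by
  apply Summable.of_nonneg_of_le
    (fun n => mul_nonneg (a_pos hk n).le (by positivity))
    (fun n => ?_) ((summable_aux hk 1 hx0.le hx1).div_const x)
  rcases n with _ | m
  · simp
  · apply le_of_eq
    show a k (m+1) * (((m+1:ℕ):ℝ) * x^(m+1-1)) = a k (m+1) * ((m+1:ℕ):ℝ)^1 * x^(m+1) / x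
    simp only [Nat.add_sub_cancel, pow_one, pow_succ]
    field_simp

lemma summable_S2 {k : ℕ} (hk : 1 ≤ k) {x : ℝ} (hx0 : 0 < x) (hx1 : x < 1) :
    Summable (fun n : ℕ => a k n * ((n:ℝ) * (((n-1:ℕ):ℝ) * x^(n-2)))) := by
  apply Summable.of_nonneg_of_le
    (fun n => mul_nonneg (a_pos hk n).le (by positivity))
    (fun n => ?_) ((summable_aux hk 2 hx0.le hx1).div_const (x^2))
  rcases n with _ | m
  · simp
  rcases m with _ | p
  · show a k 1 * (((1:ℕ):ℝ) * (((0:ℕ):ℝ) * x^(1-2))) ≤ a k 1 * ((1:ℕ):ℝ)^2 * x^1 / x^2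
    simp only [Nat.cast_zero, zero_mul, mul_zero]
    have := (a_pos hk 1).le
    positivity
  · show a k (p+1+1) * (((p+1+1:ℕ):ℝ) * (((p+1+1-1:ℕ):ℝ) * x^(p+1+1-2)))
      ≤ a k (p+1+1) * ((p+1+1:ℕ):ℝ)^2 * x^(p+1+1) / x^2
    simp only [show p+1+1-1 = p+1 from rfl, show p+1+1-2 = p from rfl]
    have h2 : ((p+1:ℕ):ℝ) ≤ ((p+1+1:ℕ):ℝ) := Nat.cast_le.2 (by omega)
    have heq : a k (p+1+1) * ((p+1+1:ℕ):ℝ)^2 * x^(p+1+1) / x^2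
        = a k (p+1+1) * (((p+1+1:ℕ):ℝ)^2 * x^p) := by
      field_simp [hx0.ne']
      ring
    rw [heq]
    apply mul_le_mul_of_nonneg_left _ (a_pos hk _).le
    calc ((p+1+1:ℕ):ℝ) * (((p+1:ℕ):ℝ) * x^p)
        ≤ ((p+1+1:ℕ):ℝ) * (((p+1+1:ℕ):ℝ) * x^p) := by
          apply mul_le_mul_of_nonneg_left _ (Nat.cast_nonneg _)
          exact mul_le_mul_of_nonneg_right h2 (by positivity)
      _ = ((p+1+1:ℕ):ℝ)^2 * x^p := by ring

lemma ode {k : ℕ} (hk : 1 ≤ k) {x : ℝ} (hx0 : 0 < x) (hx1 : x < 1) :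
    x*(1-x) * D2 k x + (2*(k:ℝ) - (2*(k:ℝ)+1)*x) * D1 k x
      - (k:ℝ)^2 * (∑' n : ℕ, a k n * x^n) = 0 := by
  have h0 := (summable_S0 hk hx0 hx1).hasSum
  have h1 : HasSum (fun n : ℕ => a k n * ((n:ℝ) * x^(n-1))) (D1 k x) :=
    (summable_S1 hk hx0 hx1).hasSum
  have h2 : HasSum (fun n : ℕ => a k n * ((n:ℝ) * (((n-1:ℕ):ℝ) * x^(n-2)))) (D2 k x) :=
    (summable_S2 hk hx0 hx1).hasSum
  have hcomb := (h2.mul_left (x*(1-x))).add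
    ((h1.mul_left (2*(k:ℝ) - (2*(k:ℝ)+1)*x)).sub (h0.mul_left ((k:ℝ)^2)))
  have hterm : (fun n : ℕ => x*(1-x) * (a k n * ((n:ℝ) * (((n-1:ℕ):ℝ) * x^(n-2))))
      + ((2*(k:ℝ) - (2*(k:ℝ)+1)*x) * (a k n * ((n:ℝ) * x^(n-1)))
        - (k:ℝ)^2 * (a k n * x^n)))
      = fun n => Aa k x n - Bb k x n := by
    funext n
    rcases n with _ | n
    · simp [Aa, Bb]
    rcases n with _ | n
    · simp only [Aa, Bb, show (1:ℕ)-1 = 0 from rfl, show (1:ℕ)-2 = 0 from rfl]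
      push_cast
      ring
    · simp only [Aa, Bb, show n+1+1-1 = n+1 from rfl, show n+1+1-2 = n from rfl]
      push_cast
      ring
  rw [hterm] at hcomb
  have hAB : ∀ n : ℕ, Aa k x (n+1) = Bb k x n := by
    intro n
    simp only [Aa, Bb, Nat.add_sub_cancel]
    push_cast
    linear_combination x^n * a_rec hk n
  have hBsum : Summable (Bb k x) := by
    apply Summable.of_nonneg_of_le
      (fun n => mul_nonneg (mul_nonneg (by positivity) (a_pos hk n).le) (by positivity))
      (fun n => ?_)
      (((summable_aux hk 2 hx0.le hx1).mul_left ((2*(k:ℝ))^2)).add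
        ((summable_aux hk 0 hx0.le hx1).mul_left ((k:ℝ)^2)))
    have hk' : (1:ℝ) ≤ (k:ℝ) := by exact_mod_cast hk
    have hax : (0:ℝ) ≤ a k n * x^n := mul_nonneg (a_pos hk n).le (by positivity)
    have hkey : ((n:ℝ) + (k:ℝ))^2 ≤ (2*(k:ℝ))^2 * (n:ℝ)^2 + (k:ℝ)^2 := by
      rcases Nat.eq_zero_or_pos n with hn | hn
      · subst hn; simp
      · have hn' : (1:ℝ) ≤ (n:ℝ) := by exact_mod_cast hn
        have e0 : (0:ℝ) ≤ ((k:ℝ)-1)*((n:ℝ)-1) :=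
          mul_nonneg (by linarith) (by linarith)
        have e1 : (n:ℝ)^2 ≤ (k:ℝ)^2*(n:ℝ)^2 := by nlinarith
        have e2 : 2*(n:ℝ)*(k:ℝ) ≤ 2*(k:ℝ)^2*(n:ℝ)^2 := by nlinarith
        nlinarith [e1, e2]
    calc Bb k x n = ((n:ℝ) + (k:ℝ))^2 * (a k n * x^n) := by rw [Bb]; ring
      _ ≤ ((2*(k:ℝ))^2 * (n:ℝ)^2 + (k:ℝ)^2) * (a k n * x^n) :=
          mul_le_mul_of_nonneg_right hkey hax
      _ = (2*(k:ℝ))^2 * (a k n * (n:ℝ)^2 * x^n) + (k:ℝ)^2 * (a k n * (n:ℝ)^0 * x^n) := by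
          ring
  have hAsum : Summable (Aa k x) := by
    refine (summable_nat_add_iff 1).1 ?_
    simpa only [hAB] using hBsum
  have hsplit : HasSum (fun n => Aa k x n - Bb k x n)
      ((∑' n, Aa k x n) - ∑' n, Bb k x n) := hAsum.hasSum.sub hBsum.hasSum
  have hS := hcomb.unique hsplit
  have hA0 : Aa k x 0 = 0 := by simp [Aa]
  have hAeq : (∑' n, Aa k x n) = ∑' n, Bb k x n := by
    rw [Summable.tsum_eq_zero_add hAsum, hA0]
    simp only [hAB, zero_add]
  rw [hAeq] at hS
  linarith [hS]

lemma cast_mul_pow_pred (x : ℝ) (hx : x ≠ 0) (m : ℕ) :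
    (m:ℝ) * x^(m-1) = (m:ℝ) * x^m / x := by
  rcases m with _ | p
  · simp
  · simp only [Nat.add_sub_cancel, pow_succ]
    field_simp

end HAux

/-- `y(x) = x^k √(1−x) H_k(x)` is twice differentiable on `(0,1)` and
satisfies `y'' = (u²f + g)·y` there, with `u = k − 1/2`, `f(x) = 1/(x²(1−x))` and
`g(x) = −1/(4x²(1−x)²) + 1/(4x(1−x))`. -/
theorem H_normal_form_ode (k : ℕ) (hk : 1 ≤ k) :
    ∀ x ∈ Set.Ioo (0 : ℝ) 1,
      DifferentiableAt ℝ (fun t => t ^ k * Real.sqrt (1 - t) * H k t) x ∧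
      DifferentiableAt ℝ (deriv (fun t => t ^ k * Real.sqrt (1 - t) * H k t)) x ∧
      deriv (deriv (fun t => t ^ k * Real.sqrt (1 - t) * H k t)) x =
        (((k : ℝ) - 1 / 2) ^ 2 * (1 / (x ^ 2 * (1 - x)))
          + (-(1 / (4 * x ^ 2 * (1 - x) ^ 2)) + 1 / (4 * x * (1 - x))))
          * (x ^ k * Real.sqrt (1 - x) * H k x) := by
  obtain ⟨m, rfl⟩ : ∃ m, k = m + 1 := ⟨k - 1, by omega⟩
  intro x hx
  obtain ⟨hx0, hx1⟩ := hx
  have h1x : (0:ℝ) < 1 - x := by linarith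
  have hxabs : |x| < 1 := abs_lt.2 ⟨by linarith, hx1⟩
  have hkm : 1 ≤ m + 1 := by omega
  have hHfun : H (m+1) = fun z : ℝ => ∑' n : ℕ, HAux.a (m+1) n * z^n := rfl
  have hsqrt : ∀ t : ℝ, t < 1 → HasDerivAt (fun u : ℝ => Real.sqrt (1 - u))
      (-(1 / (2 * Real.sqrt (1 - t)))) t := by
    intro t ht
    have hne : (1 - t) ≠ 0 := by linarith
    have h := (Real.hasDerivAt_sqrt hne).comp t ((hasDerivAt_id t).const_sub 1)
    exact h.congr_deriv (by ring)
  have hyD : ∀ t ∈ Set.Ioo (0:ℝ) 1,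
      HasDerivAt (fun u : ℝ => u ^ (m+1) * Real.sqrt (1 - u) * H (m+1) u)
        ((↑(m+1) * t^(m+1-1) * Real.sqrt (1-t) + t^(m+1) * (-(1/(2*Real.sqrt (1-t))))) *
            H (m+1) t
          + t^(m+1) * Real.sqrt (1-t) * HAux.D1 (m+1) t) t := by
    intro t ht
    have htabs : |t| < 1 := abs_lt.2 ⟨by linarith [ht.1], ht.2⟩
    have hH : HasDerivAt (H (m+1)) (HAux.D1 (m+1) t) t := by
      rw [hHfun]; exact HAux.hasDerivAt_H hkm htabs
    exact ((hasDerivAt_pow (m+1) t).mul (hsqrt t ht.2)).mul hH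
  set F1 : ℝ → ℝ := fun t =>
      (((m:ℝ)+1) * t^m * Real.sqrt (1-t) - t^(m+1) * (1/(2*Real.sqrt (1-t)))) * H (m+1) t
        + t^(m+1) * Real.sqrt (1-t) * HAux.D1 (m+1) t with hF1def
  have hEq : deriv (fun u : ℝ => u ^ (m+1) * Real.sqrt (1 - u) * H (m+1) u) =ᶠ[nhds x] F1 := by
    filter_upwards [Ioo_mem_nhds hx0 hx1] with t ht
    rw [(hyD t ht).deriv, hF1def]
    simp only [Nat.add_sub_cancel]
    push_cast
    ring
  -- derivative of F1 at x
  have hHx : HasDerivAt (H (m+1)) (HAux.D1 (m+1) x) x := by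
    rw [hHfun]; exact HAux.hasDerivAt_H hkm hxabs
  have hD1x : HasDerivAt (HAux.D1 (m+1)) (HAux.D2 (m+1) x) x := HAux.hasDerivAt_D1 hkm hxabs
  have hsx := hsqrt x hx1
  have hs_pos : 0 < Real.sqrt (1 - x) := Real.sqrt_pos.2 h1x
  have h2sne : 2 * Real.sqrt (1-x) ≠ 0 := by positivity
  have hdiv : HasDerivAt (fun t : ℝ => 1/(2*Real.sqrt (1-t)))
      ((0 * (2*Real.sqrt (1-x)) - 1 * (2 * -(1/(2*Real.sqrt (1-x))))) / (2*Real.sqrt (1-x))^2)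
      x := (hasDerivAt_const x (1:ℝ)).div (hsx.const_mul 2) h2sne
  have hF1' := ((((((hasDerivAt_pow m x).const_mul ((m:ℝ)+1)).mul hsx).sub
      ((hasDerivAt_pow (m+1) x).mul hdiv)).mul hHx).add
    ((((hasDerivAt_pow (m+1) x).mul hsx).mul hD1x)))
  have hF1 : HasDerivAt F1 _ x := hF1'
  refine ⟨(hyD x ⟨hx0, hx1⟩).differentiableAt, hEq.differentiableAt_iff.2 hF1.differentiableAt, ?_⟩
  rw [hEq.deriv_eq, hF1.deriv]
  simp only [Pi.mul_apply, Pi.sub_apply]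
  -- now pure algebra
  have hode := HAux.ode hkm hx0 hx1
  have hHts : H (m+1) x = ∑' n : ℕ, HAux.a (m+1) n * x^n := rfl
  rw [← hHts] at hode
  have hxx : x * (1-x) ≠ 0 := (mul_pos hx0 h1x).ne'
  have hD2eq : HAux.D2 (m+1) x
      = (((m:ℝ)+1)^2 * H (m+1) x - (2*((m:ℝ)+1) - (2*((m:ℝ)+1)+1)*x) * HAux.D1 (m+1) x)
        / (x*(1-x)) := by
    rw [eq_div_iff hxx]
    push_cast at hode
    linarith [hode]
  rw [hD2eq, HAux.cast_mul_pow_pred x hx0.ne' m]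
  simp only [Nat.add_sub_cancel]
  push_cast
  set s := Real.sqrt (1 - x) with hs_def
  have hs2 : s^2 = 1 - x := Real.sq_sqrt h1x.le
  have hsne : s ≠ 0 := hs_pos.ne'
  have hxeq : x = 1 - s^2 := by linarith
  rw [hxeq]
  have hxs0 : (1:ℝ) - s^2 ≠ 0 := by rw [← hxeq]; exact hx0.ne'
  have h1ms : (1:ℝ) - (1 - s^2) ≠ 0 := by rw [sub_sub_cancel]; exact pow_ne_zero 2 hsne
  field_simp
  ring


end
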